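/- The nontrivial direction of cost decomposition by levels: an edge e = {u,v} belongs to E_T(t) (is cut at level t) if and only if t < r(u,v), where r(u,v) is the size of the minimal cluster of T containing both u and v; equivalently, the level-t partition into maximal clusters of size at most t separates u and v exactly when t < r(u,v). -/

import Mathlib

/-- A rooted binary tree whose leaves are labelled by elements of `α`.
A hierarchical clustering of a vertex set is such a tree whose leaf set is the vertex set. -/
inductive HCTree (α : Type) where
  | leaf : α → HCTree α
  | node : HCTree α → HCTree α → HCTree α

namespace HCTree

variable {α : Type} [DecidableEq α]

/-- The set of leaf labels of the tree. -/
def leaves : HCTree α → Finset α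
  | leaf v => {v}
  | node l r => l.leaves ∪ r.leaves

/-- The leaf set of the minimal subtree of `T` containing both `u` and `v`
(i.e. the cluster at the lowest common ancestor of `u` and `v`). -/
def cluster : HCTree α → α → α → Finset α
  | leaf w, _, _ => {w}
  | node l r, u, v =>
    if u ∈ l.leaves ∧ v ∈ l.leaves then l.cluster u v
    else if u ∈ r.leaves ∧ v ∈ r.leaves then r.cluster u v
    else l.leaves ∪ r.leaves

/-- A tree is proper if its leaf labels are distinct, i.e. the leaf sets of the two
children of every internal node are disjoint. -/
def proper : HCTree α → Prop
  | leaf _ => True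
  | node l r => Disjoint l.leaves r.leaves ∧ l.proper ∧ r.proper

end HCTree

namespace HCTree

variable {α : Type} [DecidableEq α]

/-- The level-`t` partition of the leaves: the maximal clusters of the tree of
size at most `t` (singleton leaves are always clusters). -/
def levelClusters (t : ℕ) : HCTree α → Finset (Finset α)
  | leaf v => {{v}}
  | node l r =>
    if (l.leaves ∪ r.leaves).card ≤ t then {l.leaves ∪ r.leaves}
    else l.levelClusters t ∪ r.levelClusters t

end HCTree

/-!
Induction on the tree. At a node whose leaf set has at most `t` elements the whole node is one
level-`t` cluster, and it contains the cluster of `u, v`. Otherwise the level-`t` partition is the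
union of the children's partitions; since the children have disjoint leaf sets, `u` and `v` can
share a part only inside a child containing both, whose cluster of `u, v` is that of the node. If
they lie in different children, their cluster is the whole node, of size `> t`, and no part
contains both.
-/

namespace HCTree

variable {α : Type} [DecidableEq α]

theorem cluster_subset_leaves (T : HCTree α) (u v : α) : T.cluster u v ⊆ T.leaves := by
  induction T with
  | leaf w => simp [cluster, leaves]
  | node l r ihl ihr =>
    simp only [cluster, leaves]
    split_ifs
    · exact ihl.trans Finset.subset_union_left
    · exact ihr.trans Finset.subset_union_right
    · exact subset_rfl

theorem cluster_node_of_mem_left {l r : HCTree α} {u v : α}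
    (hu : u ∈ l.leaves) (hv : v ∈ l.leaves) : (node l r).cluster u v = l.cluster u v := by
  simp [cluster, hu, hv]

theorem cluster_node_of_mem_right {l r : HCTree α} {u v : α} (hlr : Disjoint l.leaves r.leaves)
    (hu : u ∈ r.leaves) (hv : v ∈ r.leaves) : (node l r).cluster u v = r.cluster u v := by
  simp [cluster, Finset.disjoint_right.1 hlr hu, hu, hv]

theorem cluster_node_of_not_mem {l r : HCTree α} {u v : α}
    (hl : ¬(u ∈ l.leaves ∧ v ∈ l.leaves)) (hr : ¬(u ∈ r.leaves ∧ v ∈ r.leaves)) :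
    (node l r).cluster u v = l.leaves ∪ r.leaves := by
  simp only [cluster, if_neg hl, if_neg hr]

theorem exists_mem_levelClusters_iff {T : HCTree α} (hT : T.proper) (t : ℕ) {u v : α}
    (huv : u ≠ v) :
    (∃ C ∈ T.levelClusters t, u ∈ C ∧ v ∈ C) ↔
      u ∈ T.leaves ∧ v ∈ T.leaves ∧ (T.cluster u v).card ≤ t := by
  induction T with
  | leaf w =>
    have : ¬(u = w ∧ v = w) := fun h => huv (h.1.trans h.2.symm)
    simp only [levelClusters, leaves, Finset.mem_singleton, exists_eq_left]
    tauto
  | node l r ihl ihr =>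
    obtain ⟨hlr, hl, hr⟩ := hT
    by_cases hcard : (l.leaves ∪ r.leaves).card ≤ t
    · have hle : ((node l r).cluster u v).card ≤ t :=
        (Finset.card_le_card (cluster_subset_leaves _ u v)).trans hcard
      simp [levelClusters, leaves, hcard, hle]
    rw [levelClusters, if_neg hcard]
    simp only [Finset.mem_union, or_and_right, exists_or, ihl hl, ihr hr, leaves]
    by_cases hl_uv : u ∈ l.leaves ∧ v ∈ l.leaves
    · have hu_r : u ∉ r.leaves := Finset.disjoint_left.1 hlr hl_uv.1
      rw [cluster_node_of_mem_left hl_uv.1 hl_uv.2]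
      tauto
    by_cases hr_uv : u ∈ r.leaves ∧ v ∈ r.leaves
    · rw [cluster_node_of_mem_right hlr hr_uv.1 hr_uv.2]
      tauto
    rw [cluster_node_of_not_mem hl_uv hr_uv]
    tauto

end HCTree

/-- an edge `{u,v}` is separated by the level-`t` partition into
maximal clusters of size at most `t` if and only if `t < r(u,v)`, where `r(u,v)`
is the size of the minimal cluster of `T` containing both `u` and `v`. -/
theorem separated_iff_lt_cluster_card {α : Type} [DecidableEq α]
    (T : HCTree α) (hT : T.proper) (t : ℕ) (u v : α)
    (hu : u ∈ T.leaves) (hv : v ∈ T.leaves) (huv : u ≠ v) :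
    (∀ C ∈ T.levelClusters t, ¬(u ∈ C ∧ v ∈ C)) ↔ t < (T.cluster u v).card := by
  simpa [hu, hv] using (HCTree.exists_mem_levelClusters_iff hT t huv).not
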